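/- arXiv:1307.0632 — 2 statements merged into one kernel-verified Lean document; each statement's English description precedes it below -/
import Mathlib

section
/- Let G₁, ..., G_k be independent uniformly random 2-element subsets of {1, ..., n}. Then the probability that G₁, ..., G_k form a circuit of depth k (i.e., each G_{i+1} intersects G₁ ∪ ... ∪ G_i for every i, in the greedy-parallelization sense where each successive gate starts a new level) is at most (2/n)^{k-1} · k!. -/
attribute [local instance] Classical.propDecidable

/-!
If every gate after the first meets the union of its predecessors, the first `i` gates cover at
most `i + 1` qubits, so gate `i + 1` is one of at most `(i + 1) (n - 1)` of the `C(n, 2)` gates.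
Multiplying these conditional probabilities gives
`∏_{i=1}^{k-1} (i + 1) (n - 1) / C(n, 2) = k! (2 / n)^(k - 1)`.
-/

open Finset

variable {α : Type*} [DecidableEq α]

def IsGateChain {k : ℕ} (s : Fin k → Finset α) : Prop :=
  ∀ i : Fin k, 0 < i.val → (s i ∩ (univ.filter (fun j : Fin k => j < i)).biUnion s).Nonempty

namespace IsGateChain

variable {k : ℕ} {s : Fin (k + 1) → Finset α}

theorem init (h : IsGateChain s) : IsGateChain (Fin.init s) := by
  intro i hi
  have := h i.castSucc hi
  rwa [filter_gt_eq_Iio, ← Fin.map_castSuccEmb_Iio, map_eq_image, image_biUnion,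
    ← filter_gt_eq_Iio] at this

theorem last_inter_nonempty (h : IsGateChain s) (hk : 0 < k) :
    (s (Fin.last k) ∩ univ.biUnion (Fin.init s)).Nonempty := by
  have := h (Fin.last k) hk
  rwa [filter_gt_eq_Iio, Fin.Iio_last_eq_map, map_eq_image, image_biUnion] at this

end IsGateChain

theorem Fin.biUnion_univ_castSucc {k : ℕ} (s : Fin (k + 1) → Finset α) :
    univ.biUnion s = univ.biUnion (Fin.init s) ∪ s (Fin.last k) := by
  rw [Fin.univ_castSuccEmb, cons_eq_insert, biUnion_insert, union_comm, map_eq_image,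
    image_biUnion]
  rfl

theorem card_biUnion_le_of_isGateChain {k : ℕ} {s : Fin k → Finset α} (h : IsGateChain s)
    (hs : ∀ i, (s i).card = 2) : (univ.biUnion s).card ≤ k + 1 := by
  induction k with
  | zero => simp
  | succ k ih =>
    have hU := ih h.init fun i => hs _
    have ht := hs (Fin.last k)
    rw [Fin.biUnion_univ_castSucc]
    rcases k.eq_zero_or_pos with rfl | hk
    · simpa using (hs 0).le
    · have hI := (h.last_inter_nonempty hk).card_pos
      have := card_union_add_card_inter (univ.biUnion (Fin.init s)) (s (Fin.last k))
      rw [inter_comm] at hI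
      omega

section Gates

variable (α) [Fintype α]

abbrev Gate := {s : Finset α // s.card = 2}

noncomputable def gateChains (k : ℕ) : Finset (Fin k → Gate α) :=
  univ.filter fun g => IsGateChain fun i => (g i).val

variable {α}

theorem card_filter_mem_gate_le (u : α) :
    (univ.filter fun g : Gate α => u ∈ g.val).card ≤ Fintype.card α - 1 := by
  have hsub : (univ.filter fun g : Gate α => u ∈ g.val).map (Function.Embedding.subtype _) ⊆
      (univ.erase u).image fun v => {u, v} := by
    intro s hs
    obtain ⟨⟨s, hs2⟩, hmem, rfl⟩ := mem_map.1 hs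
    have hu : u ∈ s := (mem_filter.1 hmem).2
    obtain ⟨x, y, hxy, rfl⟩ := card_eq_two.1 hs2
    simp only [mem_insert, mem_singleton] at hu
    rcases hu with rfl | rfl
    · exact mem_image.2 ⟨y, mem_erase.2 ⟨hxy.symm, mem_univ _⟩, rfl⟩
    · exact mem_image.2 ⟨x, mem_erase.2 ⟨hxy, mem_univ _⟩, pair_comm _ _⟩
  calc _ = _ := (card_map _).symm
    _ ≤ _ := card_le_card hsub
    _ ≤ (univ.erase u).card := card_image_le
    _ = Fintype.card α - 1 := by rw [card_erase_of_mem (mem_univ u), card_univ]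

theorem card_filter_gate_inter_nonempty_le (U : Finset α) :
    (univ.filter fun g : Gate α => (g.val ∩ U).Nonempty).card ≤
      U.card * (Fintype.card α - 1) := by
  have hsub : (univ.filter fun g : Gate α => (g.val ∩ U).Nonempty) ⊆
      U.biUnion fun u => univ.filter fun g : Gate α => u ∈ g.val := by
    intro g hg
    obtain ⟨u, hu⟩ := (mem_filter.1 hg).2
    exact mem_biUnion.2 ⟨u, (mem_inter.1 hu).2, mem_filter.2 ⟨mem_univ _, (mem_inter.1 hu).1⟩⟩
  calc _ ≤ _ := card_le_card hsub
    _ ≤ ∑ u ∈ U, (univ.filter fun g : Gate α => u ∈ g.val).card := card_biUnion_le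
    _ ≤ ∑ _u ∈ U, (Fintype.card α - 1) := sum_le_sum fun u _ => card_filter_mem_gate_le u
    _ = U.card * (Fintype.card α - 1) := by rw [sum_const, smul_eq_mul]

theorem card_gateChains_succ_le {k : ℕ} (hk : 0 < k) :
    (gateChains α (k + 1)).card ≤ (gateChains α k).card * ((k + 1) * (Fintype.card α - 1)) := by
  set extensions := fun g : Fin k → Gate α =>
    univ.filter fun t : Gate α => (t.val ∩ univ.biUnion fun i => (g i).val).Nonempty
  have hsub : gateChains α (k + 1) ⊆
      ((gateChains α k).sigma extensions).image fun p => Fin.snoc p.1 p.2 := by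
    intro g hg
    have hchain := (mem_filter.1 hg).2
    refine mem_image.2 ⟨⟨Fin.init g, g (Fin.last k)⟩, mem_sigma.2 ⟨?_, ?_⟩, Fin.snoc_init_self g⟩
    · exact mem_filter.2 ⟨mem_univ _, hchain.init⟩
    · exact mem_filter.2 ⟨mem_univ _, hchain.last_inter_nonempty hk⟩
  calc _ ≤ _ := card_le_card hsub
    _ ≤ _ := card_image_le
    _ = ∑ g ∈ gateChains α k, (extensions g).card := card_sigma _ _
    _ ≤ ∑ _g ∈ gateChains α k, (k + 1) * (Fintype.card α - 1) := by
      refine sum_le_sum fun g hg => (card_filter_gate_inter_nonempty_le _).trans ?_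
      exact Nat.mul_le_mul_right _
        (card_biUnion_le_of_isGateChain (mem_filter.1 hg).2 fun i => (g i).2)
    _ = _ := by rw [sum_const, smul_eq_mul]

theorem card_gateChains_le {k : ℕ} (hk : 1 ≤ k) :
    (gateChains α k).card ≤
      (Fintype.card α).choose 2 * ((Fintype.card α - 1) ^ (k - 1) * k.factorial) := by
  induction k, hk using Nat.le_induction with
  | base =>
    calc _ ≤ (univ : Finset (Fin 1 → Gate α)).card := card_filter_le _ _
      _ = _ := by simp [Fintype.card_finset_len]
  | succ k hk ih =>
    calc _ ≤ _ := card_gateChains_succ_le hk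
      _ ≤ _ := Nat.mul_le_mul_right _ ih
      _ = _ := by
        obtain ⟨m, rfl⟩ := Nat.exists_eq_add_of_le' hk
        simp only [Nat.add_sub_cancel, Nat.factorial_succ (m + 1), pow_succ]
        ring

end Gates

theorem cast_sub_one_div_cast_choose_two {n : ℕ} (hn : 2 ≤ n) :
    ((n - 1 : ℕ) : ℝ) / (n.choose 2 : ℝ) = 2 / n := by
  have : (n : ℝ) - 1 ≠ 0 := by
    have : (2 : ℝ) ≤ n := by exact_mod_cast hn
    linarith
  rw [Nat.cast_choose_two, Nat.cast_sub (by omega : 1 ≤ n), Nat.cast_one]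
  field_simp

/-- `k` independent uniformly random 2-element subsets (gates) of `{1,...,n}` form a
circuit of depth `k` (every gate intersects the union of the previous ones) with
probability at most `(2/n)^(k-1) * k!`. -/
theorem depth_k_chain_prob
    (n k : ℕ) (hn : 2 ≤ n) (hk : 1 ≤ k) :
    ((Finset.univ.filter (fun g : Fin k → {s : Finset (Fin n) // s.card = 2} =>
        ∀ i : Fin k, 0 < i.val →
          ((g i).val ∩ (Finset.univ.filter (fun j : Fin k => j < i)).biUnion
              (fun j => (g j).val)).Nonempty)).card : ℝ) /
      (Fintype.card (Fin k → {s : Finset (Fin n) // s.card = 2}) : ℝ)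
    ≤ (2 / n) ^ (k - 1) * (Nat.factorial k) := by
  have hcount : (gateChains (Fin n) k).card ≤
      n.choose 2 * ((n - 1) ^ (k - 1) * k.factorial) := by
    simpa using card_gateChains_le (α := Fin n) hk
  have hN : (n.choose 2 : ℝ) ≠ 0 := by exact_mod_cast (Nat.choose_pos hn).ne'
  obtain ⟨m, rfl⟩ := Nat.exists_eq_add_of_le' hk
  rw [Fintype.card_fun, Fintype.card_finset_len, Fintype.card_fin, Fintype.card_fin, Nat.cast_pow,
    Nat.add_sub_cancel, ← cast_sub_one_div_cast_choose_two hn]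
  calc _ = ((gateChains (Fin n) (m + 1)).card : ℝ) / (n.choose 2 : ℝ) ^ (m + 1) := by
        -- the two filters differ only in their decidability instances
        unfold gateChains IsGateChain
        congr
    _ ≤ n.choose 2 * (((n - 1 : ℕ) : ℝ) ^ m * (m + 1).factorial) / (n.choose 2 : ℝ) ^ (m + 1) := by
        gcongr
        exact_mod_cast hcount
    _ = _ := by
        rw [div_pow]
        field_simp
        ring
end

section
/- The Markov chain P on states {0, 1, ..., n} with transition probabilities P(ℓ, ℓ-1) = 2ℓ(ℓ-1)/(5n(n-1)), P(ℓ, ℓ+1) = 6ℓ(n-ℓ)/(5n(n-1)), P(ℓ, ℓ) = 1 - 2ℓ(3n - 2ℓ - 1)/(5n(n-1)), and all other transitions zero, has stationary distribution π(k) = 3^k · binom(n,k) / (4^n - 1) on states {1, ..., n}. -/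
/-!
The chain is reversible: the detailed balance equation
`3^ℓ C(n,ℓ) P(ℓ,ℓ+1) = 3^(ℓ+1) C(n,ℓ+1) P(ℓ+1,ℓ)` reduces to `C(n,ℓ) (n-ℓ) = C(n,ℓ+1) (ℓ+1)`.
Since moreover `P(1,0) = 0` and `P(n,n+1) = 0`, every row of `P` restricted to `{1,...,n}`
sums to one, and a reversible weight is stationary for such a kernel.
-/

open Finset

theorem sum_mul_eq_of_detailed_balance {ι R : Type*} [CommSemiring R] {s : Finset ι}
    {π : ι → R} {P : ι → ι → R} (hrev : ∀ i ∈ s, ∀ j ∈ s, π i * P i j = π j * P j i)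
    (hrow : ∀ i ∈ s, ∑ j ∈ s, P i j = 1) {j : ι} (hj : j ∈ s) :
    ∑ i ∈ s, π i * P i j = π j := by
  rw [← mul_one (π j), ← hrow j hj, mul_sum]
  exact sum_congr rfl fun i hi => hrev i hi j hj

theorem Nat.cast_choose_succ_mul (R : Type*) [CommRing R] (n k : ℕ) :
    (n.choose (k + 1) : R) * (k + 1) = n.choose k * (n - k) := by
  rcases le_or_gt k n with hk | hk
  · rw [← Nat.cast_sub hk, ← Nat.cast_succ, ← Nat.cast_mul, ← Nat.cast_mul,
      Nat.choose_succ_right_eq]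
  · simp [Nat.choose_eq_zero_of_lt hk, Nat.choose_eq_zero_of_lt (Nat.lt_succ_of_lt hk)]

noncomputable def weightChain (n ℓ k : ℕ) : ℝ :=
  if k = ℓ then 1 - 2*(ℓ:ℝ)*(3*(n:ℝ) - 2*ℓ - 1)/(5*(n:ℝ)*((n:ℝ)-1))
  else if k + 1 = ℓ then 2*(ℓ:ℝ)*((ℓ:ℝ)-1)/(5*(n:ℝ)*((n:ℝ)-1))
  else if k = ℓ + 1 then 6*(ℓ:ℝ)*((n:ℝ)-ℓ)/(5*(n:ℝ)*((n:ℝ)-1))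
  else 0

namespace weightChain

variable {n : ℕ}

theorem apply_self (ℓ : ℕ) :
    weightChain n ℓ ℓ = 1 - 2*(ℓ:ℝ)*(3*(n:ℝ) - 2*ℓ - 1)/(5*(n:ℝ)*((n:ℝ)-1)) :=
  if_pos rfl

theorem apply_succ_left (k : ℕ) :
    weightChain n (k + 1) k = 2*((k:ℝ) + 1)*k/(5*(n:ℝ)*((n:ℝ)-1)) := by
  simp [weightChain]

theorem apply_succ_right (ℓ : ℕ) :
    weightChain n ℓ (ℓ + 1) = 6*(ℓ:ℝ)*((n:ℝ)-ℓ)/(5*(n:ℝ)*((n:ℝ)-1)) := by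
  simp [weightChain, show ℓ + 1 + 1 ≠ ℓ by omega]

theorem apply_of_not_adj {ℓ k : ℕ} (h : k ≠ ℓ) (h₁ : k + 1 ≠ ℓ) (h₂ : k ≠ ℓ + 1) :
    weightChain n ℓ k = 0 := by
  simp [weightChain, h, h₁, h₂]

theorem row_sum_eq_one {k : ℕ} (hk : k ∈ Icc 1 n) : ∑ ℓ ∈ Icc 1 n, weightChain n k ℓ = 1 := by
  obtain ⟨hk₁, hkn⟩ := mem_Icc.1 hk
  obtain ⟨j, rfl⟩ : ∃ j, k = j + 1 := ⟨k - 1, by omega⟩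
  have hsupp : ∑ ℓ ∈ Icc 1 n, weightChain n (j + 1) ℓ
      = ∑ ℓ ∈ {j, j + 1, j + 2}, weightChain n (j + 1) ℓ := by
    refine sum_congr_of_eq_on_inter ?_ ?_ fun _ _ _ => rfl
    · intro ℓ _ hℓ
      simp only [mem_insert, mem_singleton, not_or] at hℓ
      exact apply_of_not_adj (by omega) (by omega) (by omega)
    · intro ℓ hℓ hℓn
      simp only [mem_insert, mem_singleton, mem_Icc] at hℓ hℓn
      rcases hℓ with rfl | rfl | rfl
      · rw [apply_succ_left, show ℓ = 0 by omega]; simp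
      · omega
      · rw [apply_succ_right, show j + 1 = n by omega]; simp
  rw [hsupp, sum_insert (by simp), sum_insert (by simp), sum_singleton, apply_succ_left,
    apply_self, apply_succ_right]
  push_cast
  ring

theorem detailed_balance (ℓ : ℕ) :
    (3:ℝ)^ℓ * n.choose ℓ * weightChain n ℓ (ℓ + 1)
      = (3:ℝ)^(ℓ + 1) * n.choose (ℓ + 1) * weightChain n (ℓ + 1) ℓ := by
  rw [apply_succ_right, apply_succ_left]
  linear_combination (-(6:ℝ) * 3^ℓ * ℓ / (5*(n:ℝ)*((n:ℝ)-1))) * Nat.cast_choose_succ_mul ℝ n ℓ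

theorem reversible (ℓ k : ℕ) :
    (3:ℝ)^ℓ * n.choose ℓ * weightChain n ℓ k = (3:ℝ)^k * n.choose k * weightChain n k ℓ := by
  by_cases hadj : k = ℓ ∨ k + 1 = ℓ ∨ k = ℓ + 1
  · rcases hadj with rfl | rfl | rfl
    · rfl
    · exact (detailed_balance k).symm
    · exact detailed_balance ℓ
  · simp only [not_or] at hadj
    rw [apply_of_not_adj hadj.1 hadj.2.1 hadj.2.2,
      apply_of_not_adj (Ne.symm hadj.1) (by omega) (by omega), mul_zero, mul_zero]

end weightChain

theorem weight_chain_stationary_general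
    (n : ℕ) (P : ℕ → ℕ → ℝ)
    (hP : ∀ ℓ k : ℕ, P ℓ k =
      if k = ℓ then 1 - 2*(ℓ:ℝ)*(3*(n:ℝ) - 2*ℓ - 1)/(5*(n:ℝ)*((n:ℝ)-1))
      else if k + 1 = ℓ then 2*(ℓ:ℝ)*((ℓ:ℝ)-1)/(5*(n:ℝ)*((n:ℝ)-1))
      else if k = ℓ + 1 then 6*(ℓ:ℝ)*((n:ℝ)-ℓ)/(5*(n:ℝ)*((n:ℝ)-1))
      else 0) :
    ∀ k ∈ Finset.Icc 1 n,
      ∑ ℓ ∈ Finset.Icc 1 n, ((3:ℝ)^ℓ * (n.choose ℓ) / (4^n - 1)) * P ℓ k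
        = (3:ℝ)^k * (n.choose k) / (4^n - 1) := by
  obtain rfl : P = weightChain n := funext₂ hP
  exact fun k hk => sum_mul_eq_of_detailed_balance
    (fun ℓ _ k _ => by simp only [div_mul_eq_mul_div, weightChain.reversible ℓ k])
    (fun _ => weightChain.row_sum_eq_one) hk

/-- The weight chain `P` of random quantum circuits on states `{0,...,n}` with
`P(ℓ,ℓ-1) = 2ℓ(ℓ-1)/(5n(n-1))`, `P(ℓ,ℓ+1) = 6ℓ(n-ℓ)/(5n(n-1))` and the lazy
remainder on the diagonal has stationary distribution
`π(k) = 3^k C(n,k)/(4^n - 1)` on `{1,...,n}`. -/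
theorem weight_chain_stationary
    (n : ℕ) (hn : 2 ≤ n) (P : ℕ → ℕ → ℝ)
    (hP : ∀ ℓ k : ℕ, P ℓ k =
      if k = ℓ then 1 - 2*(ℓ:ℝ)*(3*(n:ℝ) - 2*ℓ - 1)/(5*(n:ℝ)*((n:ℝ)-1))
      else if k + 1 = ℓ then 2*(ℓ:ℝ)*((ℓ:ℝ)-1)/(5*(n:ℝ)*((n:ℝ)-1))
      else if k = ℓ + 1 then 6*(ℓ:ℝ)*((n:ℝ)-ℓ)/(5*(n:ℝ)*((n:ℝ)-1))
      else 0) :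
    ∀ k ∈ Finset.Icc 1 n,
      ∑ ℓ ∈ Finset.Icc 1 n, ((3:ℝ)^ℓ * (n.choose ℓ) / (4^n - 1)) * P ℓ k
        = (3:ℝ)^k * (n.choose k) / (4^n - 1) :=
  weight_chain_stationary_general n P hP
end
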